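/- Let Ω ⊂ ℝ² be a bounded domain with Poincaré constant C_Ω (i.e., ‖v‖_{L²} ≤ C_Ω‖v‖_{H¹₀} for all v ∈ H¹₀(Ω;ℝ²), where ‖v‖_{H¹₀} = ‖∇v‖_{L²}). Let φ₁,…,φ_K : ℝ² → ℝ² be monotone nondecreasing with ‖φⱼ(w)‖_{L²(Ω)} ≤ I_φ whenever w ∈ H¹₀(Ω;ℝ²), and fix ε ∈ L²(Ω;ℝ²). Suppose α¹, α² ∈ ℝ^K have nonnegative entries, vanish in components k+1,…,K, and y^{αⁱ} ∈ H¹₀(Ω;ℝ²) are weak solutions of −Δy + Σⱼ αⁱⱼ φⱼ(y) = ε with homogeneous Dirichlet conditions. Then ‖y^{α¹} − y^{α²}‖_{H¹₀(Ω)} ≤ k · I_φ · C_Ω · ‖α¹ − α²‖_∞. -/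
import Mathlib


open scoped RealInnerProductSpace

/-- Energy estimate (abstract version of Lemma 3.6): `H` plays the role of
`H¹₀(Ω;ℝ²)`, `L2` the role of `L²(Ω;ℝ²)`, `ι` the embedding with Poincaré
constant `CΩ`, `N j` the Nemytskii operator of `φⱼ` (bounded by `Iφ` and
monotone), and `y₁, y₂` the weak solutions for coefficients `α¹, α²`
vanishing beyond the first `k` components. Then
`‖y₁ − y₂‖_{H¹₀} ≤ k · Iφ · CΩ · ‖α¹ − α²‖_∞`. -/
theorem stmt8 {H L2 : Type*} [NormedAddCommGroup H] [InnerProductSpace ℝ H]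
    [NormedAddCommGroup L2] [InnerProductSpace ℝ L2]
    (a : H →ₗ[ℝ] H →ₗ[ℝ] ℝ) (ha : ∀ v, a v v = ‖v‖ ^ 2)
    (ι : H →ₗ[ℝ] L2) (CΩ : ℝ) (hCΩ : 0 < CΩ) (hι : ∀ v, ‖ι v‖ ≤ CΩ * ‖v‖)
    (K k : ℕ) (hk : 1 ≤ k) (hkK : k ≤ K)
    (N : Fin K → H → L2) (Iφ : ℝ) (hIφ : 0 < Iφ)
    (hbound : ∀ j w, ‖N j w‖ ≤ Iφ)
    (hmono : ∀ j (u w : H), 0 ≤ ⟪N j u - N j w, ι u - ι w⟫)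
    (f : L2)
    (α₁ α₂ : Fin K → ℝ)
    (hα₁ : ∀ j, 0 ≤ α₁ j) (hα₂ : ∀ j, 0 ≤ α₂ j)
    (hvan₁ : ∀ j : Fin K, k ≤ (j : ℕ) → α₁ j = 0)
    (hvan₂ : ∀ j : Fin K, k ≤ (j : ℕ) → α₂ j = 0)
    (y₁ y₂ : H)
    (heq₁ : ∀ v, a y₁ v + ⟪∑ j, α₁ j • N j y₁, ι v⟫ = ⟪f, ι v⟫)
    (heq₂ : ∀ v, a y₂ v + ⟪∑ j, α₂ j • N j y₂, ι v⟫ = ⟪f, ι v⟫) :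
    ‖y₁ - y₂‖ ≤ (k : ℝ) * Iφ * CΩ * ‖α₁ - α₂‖ := by
  set v : H := y₁ - y₂ with hv
  -- energy identity
  have hkey : ‖v‖ ^ 2 =
      ∑ j, (α₂ j * ⟪N j y₂, ι v⟫ - α₁ j * ⟪N j y₁, ι v⟫) := by
    have h1 := heq₁ v
    have h2 := heq₂ v
    have hav : a v v = a y₁ v - a y₂ v := by
      simp only [hv, map_sub, LinearMap.sub_apply]
      ring
    have : a y₁ v - a y₂ v =
        ⟪∑ j, α₂ j • N j y₂, ι v⟫ - ⟪∑ j, α₁ j • N j y₁, ι v⟫ := by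
      linarith
    rw [← ha v, hav, this, sum_inner, sum_inner, ← Finset.sum_sub_distrib]
    simp [real_inner_smul_left]
  -- bound each summand
  have hterm : ∀ j : Fin K, α₂ j * ⟪N j y₂, ι v⟫ - α₁ j * ⟪N j y₁, ι v⟫ ≤
      (if (j : ℕ) < k then ‖α₁ - α₂‖ * (Iφ * (CΩ * ‖v‖)) else 0) := by
    intro j
    by_cases hjk : (j : ℕ) < k
    · simp only [if_pos hjk]
      have hmul : α₂ j * ⟪N j y₂, ι v⟫ - α₁ j * ⟪N j y₁, ι v⟫ =
          α₁ j * ⟪N j y₂ - N j y₁, ι v⟫ + (α₂ j - α₁ j) * ⟪N j y₂, ι v⟫ := by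
        rw [inner_sub_left]; ring
      have hmono' : α₁ j * ⟪N j y₂ - N j y₁, ι v⟫ ≤ 0 := by
        have h0 : ⟪N j y₂ - N j y₁, ι v⟫ ≤ 0 := by
          have := hmono j y₁ y₂
          have hιv : ι v = ι y₁ - ι y₂ := by simp [hv, map_sub]
          rw [hιv]
          rw [← neg_nonneg, ← inner_neg_left]
          simpa using this
        exact mul_nonpos_of_nonneg_of_nonpos (hα₁ j) h0
      have hsecond : (α₂ j - α₁ j) * ⟪N j y₂, ι v⟫ ≤
          ‖α₁ - α₂‖ * (Iφ * (CΩ * ‖v‖)) := by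
        calc (α₂ j - α₁ j) * ⟪N j y₂, ι v⟫
            ≤ |(α₂ j - α₁ j) * ⟪N j y₂, ι v⟫| := le_abs_self _
          _ = |α₂ j - α₁ j| * |⟪N j y₂, ι v⟫| := abs_mul _ _
          _ ≤ ‖α₁ - α₂‖ * (Iφ * (CΩ * ‖v‖)) := by
              have h1 : |α₂ j - α₁ j| ≤ ‖α₁ - α₂‖ := by
                rw [abs_sub_comm]
                have := norm_le_pi_norm (α₁ - α₂) j
                simpa using this
              have h2 : |⟪N j y₂, ι v⟫| ≤ Iφ * (CΩ * ‖v‖) := by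
                calc |⟪N j y₂, ι v⟫| ≤ ‖N j y₂‖ * ‖ι v‖ := abs_real_inner_le_norm _ _
                  _ ≤ Iφ * (CΩ * ‖v‖) :=
                    mul_le_mul (hbound j y₂) (hι v) (norm_nonneg _) hIφ.le
              exact mul_le_mul h1 h2 (abs_nonneg _) (norm_nonneg _)
      linarith [hmul ▸ (add_le_add hmono' hsecond)]
    · simp only [if_neg hjk]
      rw [hvan₁ j (le_of_not_gt hjk), hvan₂ j (le_of_not_gt hjk)]
      simp
  -- sum the bound
  have hcard : (Finset.univ.filter (fun j : Fin K => (j : ℕ) < k)).card = k := by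
    rw [Finset.card_filter]
    rw [Fin.sum_univ_eq_sum_range (fun i => if i < k then 1 else 0)]
    rw [← Finset.sum_filter]
    have hfil : Finset.filter (fun i => i < k) (Finset.range K) = Finset.range k := by
      ext i; simp only [Finset.mem_filter, Finset.mem_range]; omega
    simp [hfil]
  have hsum : ‖v‖ ^ 2 ≤ (k : ℝ) * (‖α₁ - α₂‖ * (Iφ * (CΩ * ‖v‖))) := by
    rw [hkey]
    calc ∑ j, (α₂ j * ⟪N j y₂, ι v⟫ - α₁ j * ⟪N j y₁, ι v⟫)
        ≤ ∑ j : Fin K, (if (j : ℕ) < k then ‖α₁ - α₂‖ * (Iφ * (CΩ * ‖v‖)) else 0) :=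
          Finset.sum_le_sum fun j _ => hterm j
      _ = (k : ℝ) * (‖α₁ - α₂‖ * (Iφ * (CΩ * ‖v‖))) := by
          rw [← Finset.sum_filter, Finset.sum_const, hcard, nsmul_eq_mul]
  -- conclude
  rcases eq_or_lt_of_le (norm_nonneg v) with h0 | h0
  · rw [← h0]
    positivity
  · have := hsum
    rw [sq] at this
    have hfin : ‖v‖ ≤ (k : ℝ) * (‖α₁ - α₂‖ * (Iφ * CΩ)) := by
      have h' : ‖v‖ * ‖v‖ ≤ ((k : ℝ) * (‖α₁ - α₂‖ * (Iφ * CΩ))) * ‖v‖ := by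
        nlinarith
      exact le_of_mul_le_mul_right h' h0
    calc ‖v‖ ≤ (k : ℝ) * (‖α₁ - α₂‖ * (Iφ * CΩ)) := hfin
      _ = (k : ℝ) * Iφ * CΩ * ‖α₁ - α₂‖ := by ring
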